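/- arXiv:0812.4167 — 2 statements merged into one kernel-verified Lean document; each statement's English description precedes it below -/
import Mathlib

section
/- Every density operator ρ on H = H_A ⊗ H_B admits an operator Schmidt decomposition ρ = Σ_{a=1}^{d} μ_a E_a^A ⊗ E_a^B, μ_a ≥ 0, in which the local orthonormal systems {E_a^A} and {E_a^B} consist of self-adjoint operators (orthonormal with respect to the real Hilbert-Schmidt inner product on the real vector spaces of self-adjoint operators on H_A and H_B); consequently each Schmidt coefficient is expressible as an expectation value μ_a = tr((E_a^A ⊗ E_a^B) ρ) of a local observable. -/
open scoped Kronecker ComplexOrder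
open Matrix Finset

/-- Hilbert-Schmidt inner product on matrices. -/
noncomputable def hsInner {n : Type*} [Fintype n] (A B : Matrix n n ℂ) : ℂ :=
  (Aᴴ * B).trace

/-- Hilbert-Schmidt norm. -/
noncomputable def hsNorm {n : Type*} [Fintype n] (A : Matrix n n ℂ) : ℝ :=
  Real.sqrt (hsInner A A).re

/-- A density operator: positive semidefinite with unit trace. -/
def IsDensity {n : Type*} [Fintype n] (ρ : Matrix n n ℂ) : Prop :=
  ρ.PosSemidef ∧ ρ.trace = 1

/-- An operator Schmidt decomposition of a bipartite operator `C`: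
`C = ∑ a, μ a • (E a ⊗ₖ F a)` with `μ a ≥ 0` and `E`, `F` orthonormal families
with respect to the Hilbert-Schmidt inner product. -/
def SchmidtDecomp {NA NB : ℕ} (C : Matrix (Fin NA × Fin NB) (Fin NA × Fin NB) ℂ)
    (μ : Fin (min (NA ^ 2) (NB ^ 2)) → ℝ)
    (E : Fin (min (NA ^ 2) (NB ^ 2)) → Matrix (Fin NA) (Fin NA) ℂ)
    (F : Fin (min (NA ^ 2) (NB ^ 2)) → Matrix (Fin NB) (Fin NB) ℂ) : Prop :=
  (∀ a, 0 ≤ μ a) ∧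
  (∀ a b, hsInner (E a) (E b) = if a = b then 1 else 0) ∧
  (∀ a b, hsInner (F a) (F b) = if a = b then 1 else 0) ∧
  C = ∑ a, (μ a : ℂ) • (E a ⊗ₖ F a)

/-!
Fix orthonormal bases `G i`, `H j` of Hermitian matrices on the two factors. The products
`G i ⊗ₖ H j` form a Hilbert–Schmidt orthonormal basis of all operators on the product, so
`ρ = ∑ i j, M i j • (G i ⊗ₖ H j)`, and the coefficients `M i j = tr ((G i ⊗ₖ H j) ρ)` are real
because both factors of the trace are Hermitian. A real singular value decomposition
`M = ∑ a, σ a • u a (v a)ᵀ` turns this into `ρ = ∑ a, σ a • (E a ⊗ₖ F a)` with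
`E a = ∑ i, u a i • G i` and `F a = ∑ j, v a j • H j`: real combinations of Hermitian matrices
are Hermitian, and the orthonormality of `u` and `v` carries over to `E` and `F`. Pairing the
decomposition with `E a ⊗ₖ F a` then isolates `σ a`.
-/

section HilbertSchmidt

variable {n m : Type*} [Fintype n] [Fintype m]

lemma hsInner_sum_left {ι : Type*} (s : Finset ι) (A : ι → Matrix n n ℂ) (B : Matrix n n ℂ) :
    hsInner (∑ i ∈ s, A i) B = ∑ i ∈ s, hsInner (A i) B := by
  simp only [hsInner, conjTranspose_sum, Matrix.sum_mul, trace_sum]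

lemma hsInner_sum_right {ι : Type*} (s : Finset ι) (A : Matrix n n ℂ) (B : ι → Matrix n n ℂ) :
    hsInner A (∑ i ∈ s, B i) = ∑ i ∈ s, hsInner A (B i) := by
  simp only [hsInner, Matrix.mul_sum, trace_sum]

lemma hsInner_add_left (A A' B : Matrix n n ℂ) :
    hsInner (A + A') B = hsInner A B + hsInner A' B := by
  simp [hsInner, Matrix.add_mul, trace_add]

lemma hsInner_smul_left (c : ℂ) (A B : Matrix n n ℂ) :
    hsInner (c • A) B = starRingEnd ℂ c * hsInner A B := by
  simp [hsInner, conjTranspose_smul, trace_smul]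

lemma hsInner_smul_right (c : ℂ) (A B : Matrix n n ℂ) :
    hsInner A (c • B) = c * hsInner A B := by
  simp [hsInner, trace_smul]

lemma hsInner_single_left [DecidableEq n] (i j : n) (c : ℂ) (B : Matrix n n ℂ) :
    hsInner (single i j c) B = starRingEnd ℂ c * B i j := by
  rw [hsInner, conjTranspose_single, trace_single_mul, smul_eq_mul, starRingEnd_apply]

lemma hsInner_kronecker (A C : Matrix n n ℂ) (B D : Matrix m m ℂ) :
    hsInner (A ⊗ₖ B) (C ⊗ₖ D) = hsInner A C * hsInner B D := by
  rw [hsInner, conjTranspose_kronecker, ← mul_kronecker_mul, trace_kronecker, hsInner, hsInner]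

lemma conj_hsInner (A B : Matrix n n ℂ) : starRingEnd ℂ (hsInner A B) = hsInner B A := by
  rw [hsInner, hsInner, starRingEnd_apply, ← trace_conjTranspose, conjTranspose_mul,
    conjTranspose_conjTranspose]

lemma hsInner_eq_trace_mul {A : Matrix n n ℂ} (hA : A.IsHermitian) (B : Matrix n n ℂ) :
    hsInner A B = (A * B).trace := by
  rw [hsInner, hA.eq]

lemma ofReal_re_hsInner {A B : Matrix n n ℂ} (hA : A.IsHermitian) (hB : B.IsHermitian) :
    ((hsInner A B).re : ℂ) = hsInner A B := by
  refine Complex.conj_eq_iff_re.mp ?_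
  rw [conj_hsInner, hsInner_eq_trace_mul hA, hsInner_eq_trace_mul hB, trace_mul_comm]

end HilbertSchmidt

lemma Matrix.IsHermitian.kronecker {n m : Type*} {A : Matrix n n ℂ} {B : Matrix m m ℂ}
    (hA : A.IsHermitian) (hB : B.IsHermitian) : (A ⊗ₖ B).IsHermitian := by
  rw [IsHermitian, conjTranspose_kronecker, hA.eq, hB.eq]

lemma Matrix.isHermitian_sum_ofReal_smul {n ι : Type*} [Fintype ι] {K : ι → Matrix n n ℂ}
    (hK : ∀ i, (K i).IsHermitian) (c : ι → ℝ) : (∑ i, (c i : ℂ) • K i).IsHermitian := by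
  simp only [IsHermitian, conjTranspose_sum, conjTranspose_smul, Complex.star_def,
    Complex.conj_ofReal, (hK _).eq]

lemma Matrix.sum_smul_kronecker_sum_smul {n m ι κ ι' : Type*} [Fintype ι] [Fintype κ]
    [Fintype ι'] (σ : κ → ℂ) (c : κ → ι → ℂ) (d : κ → ι' → ℂ) (G : ι → Matrix n n ℂ)
    (H : ι' → Matrix m m ℂ) :
    ∑ a, σ a • ((∑ i, c a i • G i) ⊗ₖ (∑ j, d a j • H j)) =
      ∑ i, ∑ j, (∑ a, σ a * c a i * d a j) • (G i ⊗ₖ H j) := by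
  ext ⟨p, p'⟩ ⟨q, q'⟩
  simp only [kroneckerMap_apply, Matrix.sum_apply, Matrix.smul_apply, smul_eq_mul, Finset.sum_mul,
    Finset.mul_sum]
  rw [Finset.sum_comm]
  conv_lhs => enter [2, j]; rw [Finset.sum_comm]
  rw [Finset.sum_comm]
  exact Finset.sum_congr rfl fun i _ => Finset.sum_congr rfl fun j _ =>
    Finset.sum_congr rfl fun a _ => by ring

def HSOrthonormal {ι n : Type*} [DecidableEq ι] [Fintype n] (K : ι → Matrix n n ℂ) : Prop :=
  ∀ a b, hsInner (K a) (K b) = if a = b then 1 else 0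

namespace HSOrthonormal

variable {ι κ n m : Type*} [DecidableEq ι] [DecidableEq κ] [Fintype n] [Fintype m]
  {K : ι → Matrix n n ℂ}

lemma kronecker {L : κ → Matrix m m ℂ} (hK : HSOrthonormal K) (hL : HSOrthonormal L) :
    HSOrthonormal fun x : ι × κ => K x.1 ⊗ₖ L x.2 := by
  intro x y
  simp only [hsInner_kronecker, hK x.1, hL x.2, Prod.ext_iff, ite_zero_mul_ite_zero, mul_one]

lemma hsInner_kronecker_sum_smul [Fintype κ] {E : κ → Matrix n n ℂ} {F : κ → Matrix m m ℂ}
    (hE : HSOrthonormal E) (hF : HSOrthonormal F) (μ : κ → ℂ) (a : κ) :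
    hsInner (E a ⊗ₖ F a) (∑ b, μ b • (E b ⊗ₖ F b)) = μ a := by
  simp [hsInner_sum_right, hsInner_smul_right, hsInner_kronecker, hE a, hF a]

variable [Fintype ι]

lemma hsInner_sum_smul (hK : HSOrthonormal K) (c : ι → ℂ) (a : ι) :
    hsInner (K a) (∑ b, c b • K b) = c a := by
  simp [hsInner_sum_right, hsInner_smul_right, hK a]

lemma linearIndependent (hK : HSOrthonormal K) : LinearIndependent ℂ K := by
  refine Fintype.linearIndependent_iff.mpr fun c hc a => ?_
  simpa [hc, hsInner] using (hK.hsInner_sum_smul c a).symm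

lemma sum_hsInner_smul [DecidableEq n] (hK : HSOrthonormal K)
    (hcard : Fintype.card ι = Fintype.card n * Fintype.card n) (X : Matrix n n ℂ) :
    ∑ a, hsInner (K a) X • K a = X := by
  have hspan : X ∈ Submodule.span ℂ (Set.range K) := by
    rw [hK.linearIndependent.span_eq_top_of_card_eq_finrank'
      (by simp [hcard, Module.finrank_matrix])]
    trivial
  obtain ⟨c, rfl⟩ := (Submodule.mem_span_range_iff_exists_fun ℂ).mp hspan
  simp only [hK.hsInner_sum_smul]

lemma hsInner_sum_ofReal_smul (hK : HSOrthonormal K) (c d : EuclideanSpace ℝ ι) :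
    hsInner (∑ i, (c i : ℂ) • K i) (∑ i, (d i : ℂ) • K i) = (inner ℝ c d : ℂ) := by
  simp only [hsInner_sum_left, hsInner_smul_left, hK.hsInner_sum_smul, Complex.conj_ofReal,
    PiLp.inner_apply, RCLike.inner_apply, conj_trivial, Complex.ofReal_sum, Complex.ofReal_mul,
    mul_comm]

lemma sum_ofReal_smul (hK : HSOrthonormal K) {u : κ → EuclideanSpace ℝ ι}
    (hu : Orthonormal ℝ u) : HSOrthonormal fun a => ∑ i, (u a i : ℂ) • K i := by
  intro a b
  rw [hK.hsInner_sum_ofReal_smul, orthonormal_iff_ite.mp hu]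
  split_ifs <;> simp

end HSOrthonormal

section HermitianBasis

variable {n : Type*} [DecidableEq n]

/- With `ω = (1 + i) / 2` one has `|ω|² = 1 / 2` and `ω² = i / 2`, which makes the matrices
indexed by `(p, q)` and `(q, p)` orthonormal; on the diagonal `ω + conj ω = 1`. -/
noncomputable def hermitianBasis (x : n × n) : Matrix n n ℂ :=
  single x.1 x.2 ((1 + Complex.I) / 2) + single x.2 x.1 ((1 - Complex.I) / 2)

lemma conj_one_add_I_div_two : starRingEnd ℂ ((1 + Complex.I) / 2) = (1 - Complex.I) / 2 := by
  simp [map_div₀, sub_eq_add_neg, map_ofNat]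

lemma conj_one_sub_I_div_two : starRingEnd ℂ ((1 - Complex.I) / 2) = (1 + Complex.I) / 2 := by
  simp [map_div₀, sub_eq_add_neg, map_ofNat]

lemma hermitianBasis_isHermitian (x : n × n) : (hermitianBasis x).IsHermitian := by
  rw [IsHermitian, hermitianBasis, conjTranspose_add, conjTranspose_single, conjTranspose_single,
    Complex.star_def, conj_one_add_I_div_two, conj_one_sub_I_div_two, add_comm]

lemma hsOrthonormal_hermitianBasis [Fintype n] : HSOrthonormal (hermitianBasis (n := n)) := by
  rintro ⟨p, q⟩ ⟨r, s⟩
  simp only [hermitianBasis, hsInner_add_left, hsInner_single_left, Matrix.add_apply,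
    single_apply, Prod.mk.injEq, conj_one_add_I_div_two, conj_one_sub_I_div_two, ite_and]
  split_ifs <;> subst_vars <;> first | contradiction | (ring_nf <;> norm_num [Complex.I_sq])

end HermitianBasis

section SingularValueDecomposition

open Module

variable {𝕜 E F : Type*} [RCLike 𝕜] [NormedAddCommGroup E] [InnerProductSpace 𝕜 E]
  [NormedAddCommGroup F] [InnerProductSpace 𝕜 F]

theorem Orthonormal.exists_orthonormal_extension_of_card_le [FiniteDimensional 𝕜 F]
    {ι : Type*} [Fintype ι] (hcard : Fintype.card ι ≤ finrank 𝕜 F) {v : ι → F} {s : Set ι}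
    (hv : Orthonormal 𝕜 (s.domRestrict v)) :
    ∃ u : ι → F, Orthonormal 𝕜 u ∧ ∀ i ∈ s, u i = v i := by
  classical
  obtain ⟨e⟩ : Nonempty (ι ↪ Fin (finrank 𝕜 F)) :=
    Function.Embedding.nonempty_of_card_le (by simpa using hcard)
  have hv' : Orthonormal 𝕜 ((e '' s).domRestrict (Function.extend e v 0)) := by
    rw [orthonormal_iff_ite] at hv ⊢
    rintro ⟨_, i, hi, rfl⟩ ⟨_, j, hj, rfl⟩
    simpa [e.injective.extend_apply, Subtype.ext_iff, e.injective.eq_iff] using hv ⟨i, hi⟩ ⟨j, hj⟩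
  obtain ⟨b, hb⟩ := hv'.exists_orthonormalBasis_extension_of_card_eq (by simp)
  refine ⟨b ∘ e, b.orthonormal.comp e e.injective, fun i hi => ?_⟩
  rw [Function.comp_apply, hb (e i) (Set.mem_image_of_mem e hi), e.injective.extend_apply]

theorem exists_orthonormal_eq_smul_of_inner_eq_ite [FiniteDimensional 𝕜 F] {ι : Type*}
    [Fintype ι] [DecidableEq ι] (hcard : Fintype.card ι ≤ finrank 𝕜 F) (w : ι → F) (σ : ι → ℝ)
    (hw : ∀ a b, inner 𝕜 (w a) (w b) = if a = b then (σ a ^ 2 : 𝕜) else 0) :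
    ∃ u : ι → F, Orthonormal 𝕜 u ∧ ∀ a, w a = (σ a : 𝕜) • u a := by
  have hnormalized :
      Orthonormal 𝕜 ({a | σ a ≠ 0}.domRestrict fun a => (σ a : 𝕜)⁻¹ • w a) := by
    rw [orthonormal_iff_ite]
    rintro ⟨a, ha⟩ ⟨b, hb⟩
    simp only [Set.domRestrict_apply, inner_smul_left, inner_smul_right, hw, Subtype.mk.injEq]
    split_ifs with hab
    · subst hab
      have : (σ a : 𝕜) ≠ 0 := by exact_mod_cast ha
      rw [RCLike.conj_inv, RCLike.conj_ofReal]
      field_simp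
    · simp
  obtain ⟨u, hu, hus⟩ := Orthonormal.exists_orthonormal_extension_of_card_le hcard hnormalized
  refine ⟨u, hu, fun a => ?_⟩
  by_cases ha : σ a = 0
  · rw [ha, RCLike.ofReal_zero, zero_smul, ← inner_self_eq_zero (𝕜 := 𝕜), hw]
    simp [ha]
  · rw [hus a ha, smul_smul, mul_inv_cancel₀ (by exact_mod_cast ha), one_smul]

variable [FiniteDimensional 𝕜 E] [FiniteDimensional 𝕜 F]

theorem LinearMap.inner_apply_eigenvectorBasis_adjoint_comp_self (T : E →ₗ[𝕜] F)
    (a b : Fin (finrank 𝕜 E)) :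
    inner 𝕜 (T (T.isSymmetric_adjoint_comp_self.eigenvectorBasis rfl a))
      (T (T.isSymmetric_adjoint_comp_self.eigenvectorBasis rfl b)) =
      if a = b then (T.singularValues a ^ 2 : 𝕜) else 0 := by
  rw [← LinearMap.adjoint_inner_right, ← LinearMap.comp_apply,
    LinearMap.IsSymmetric.apply_eigenvectorBasis, inner_smul_right,
    orthonormal_iff_ite.mp (OrthonormalBasis.orthonormal _), ← T.sq_singularValues_fin rfl]
  split_ifs with h <;> simp [h]

theorem LinearMap.exists_orthonormal_apply_eigenvectorBasis_eq_singularValues_smul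
    (T : E →ₗ[𝕜] F) (h : finrank 𝕜 E ≤ finrank 𝕜 F) :
    ∃ u : Fin (finrank 𝕜 E) → F, Orthonormal 𝕜 u ∧ ∀ a,
      T (T.isSymmetric_adjoint_comp_self.eigenvectorBasis rfl a) =
        (T.singularValues a : 𝕜) • u a :=
  exists_orthonormal_eq_smul_of_inner_eq_ite (by simpa using h) _ _
    T.inner_apply_eigenvectorBasis_adjoint_comp_self

theorem Matrix.exists_svd_of_card_le {I J : Type*} [Fintype I] [Fintype J] [DecidableEq J]
    (M : Matrix I J ℝ) (h : Fintype.card J ≤ Fintype.card I) {ι : Type*} [Fintype ι]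
    (hι : Fintype.card ι = Fintype.card J) :
    ∃ (σ : ι → ℝ) (u : ι → EuclideanSpace ℝ I) (v : ι → EuclideanSpace ℝ J),
      (∀ a, 0 ≤ σ a) ∧ Orthonormal ℝ u ∧ Orthonormal ℝ v ∧
        ∀ i j, M i j = ∑ a, σ a * u a i * v a j := by
  set T : EuclideanSpace ℝ J →ₗ[ℝ] EuclideanSpace ℝ I := toLpLin 2 2 M
  let v := T.isSymmetric_adjoint_comp_self.eigenvectorBasis rfl
  obtain ⟨u, hu, hTv⟩ := T.exists_orthonormal_apply_eigenvectorBasis_eq_singularValues_smul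
    (by simpa using h)
  let e : ι ≃ Fin (finrank ℝ (EuclideanSpace ℝ J)) := Fintype.equivOfCardEq (by simpa using hι)
  refine ⟨fun a => T.singularValues (e a), u ∘ e, v ∘ e, fun a => T.singularValues_nonneg _,
    hu.comp e e.injective, v.orthonormal.comp e e.injective, fun i j => ?_⟩
  have hcol : M i j = T (EuclideanSpace.single j 1) i := by
    simp [T, toLpLin_apply]
  rw [hcol, ← v.sum_repr' (EuclideanSpace.single j 1), map_sum, ← e.sum_comp, WithLp.ofLp_sum,
    Finset.sum_apply]
  refine Fintype.sum_congr _ _ fun a => ?_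
  simp [v, hTv, EuclideanSpace.inner_single_right]
  ring

theorem Matrix.exists_svd {I J : Type*} [Fintype I] [Fintype J] [DecidableEq I] [DecidableEq J]
    (M : Matrix I J ℝ) {ι : Type*} [Fintype ι]
    (hι : Fintype.card ι = min (Fintype.card I) (Fintype.card J)) :
    ∃ (σ : ι → ℝ) (u : ι → EuclideanSpace ℝ I) (v : ι → EuclideanSpace ℝ J),
      (∀ a, 0 ≤ σ a) ∧ Orthonormal ℝ u ∧ Orthonormal ℝ v ∧
        ∀ i j, M i j = ∑ a, σ a * u a i * v a j := by
  rcases le_total (Fintype.card J) (Fintype.card I) with h | h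
  · exact M.exists_svd_of_card_le h (by rw [hι, min_eq_right h])
  · obtain ⟨σ, v, u, hσ, hv, hu, hM⟩ := Mᵀ.exists_svd_of_card_le h (by rw [hι, min_eq_left h])
    refine ⟨σ, u, v, hσ, hu, hv, fun i j => ?_⟩
    rw [← transpose_apply M, hM]
    exact Finset.sum_congr rfl fun a _ => mul_right_comm _ _ _

end SingularValueDecomposition

theorem stmt2_schmidt_decomposition_selfadjoint_general {NA NB : ℕ}
    (ρ : Matrix (Fin NA × Fin NB) (Fin NA × Fin NB) ℂ) (hρ : IsDensity ρ) :
    ∃ (μ : Fin (min (NA ^ 2) (NB ^ 2)) → ℝ)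
      (E : Fin (min (NA ^ 2) (NB ^ 2)) → Matrix (Fin NA) (Fin NA) ℂ)
      (F : Fin (min (NA ^ 2) (NB ^ 2)) → Matrix (Fin NB) (Fin NB) ℂ),
      SchmidtDecomp ρ μ E F ∧
      (∀ a, (E a).IsHermitian) ∧ (∀ a, (F a).IsHermitian) ∧
      (∀ a, (μ a : ℂ) = ((E a ⊗ₖ F a) * ρ).trace) := by
  have hG := hsOrthonormal_hermitianBasis (n := Fin NA)
  have hH := hsOrthonormal_hermitianBasis (n := Fin NB)
  obtain ⟨σ, u, v, hσ, hu, hv, hM⟩ :=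
    Matrix.exists_svd (ι := Fin (min (NA ^ 2) (NB ^ 2)))
      (fun i j => (hsInner (hermitianBasis i ⊗ₖ hermitianBasis j) ρ).re) (by simp [sq])
  set E := fun a => ∑ i, (u a i : ℂ) • hermitianBasis i
  set F := fun a => ∑ j, (v a j : ℂ) • hermitianBasis j
  have hE_herm a : (E a).IsHermitian := isHermitian_sum_ofReal_smul hermitianBasis_isHermitian _
  have hF_herm a : (F a).IsHermitian := isHermitian_sum_ofReal_smul hermitianBasis_isHermitian _
  have hE := hG.sum_ofReal_smul hu
  have hF := hH.sum_ofReal_smul hv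
  have hρ_eq : ρ = ∑ a, (σ a : ℂ) • (E a ⊗ₖ F a) := by
    rw [sum_smul_kronecker_sum_smul]
    conv_lhs => rw [← (hG.kronecker hH).sum_hsInner_smul (by simp; ring) ρ, Fintype.sum_prod_type]
    simp only [← Complex.ofReal_mul, ← Complex.ofReal_sum, ← hM, ofReal_re_hsInner
      ((hermitianBasis_isHermitian _).kronecker (hermitianBasis_isHermitian _)) hρ.1.1]
  refine ⟨σ, E, F, ⟨hσ, hE, hF, hρ_eq⟩, hE_herm, hF_herm, fun a => ?_⟩
  rw [← hsInner_eq_trace_mul ((hE_herm a).kronecker (hF_herm a)), hρ_eq,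
    hE.hsInner_kronecker_sum_smul hF]

/-- Every bipartite density operator admits an operator Schmidt decomposition in which the
local orthonormal systems consist of self-adjoint operators; consequently each Schmidt
coefficient is the expectation value of a local observable in the state ρ. -/
theorem stmt2_schmidt_decomposition_selfadjoint {NA NB : ℕ} (hA : 2 ≤ NA) (hB : 2 ≤ NB)
    (ρ : Matrix (Fin NA × Fin NB) (Fin NA × Fin NB) ℂ) (hρ : IsDensity ρ) :
    ∃ (μ : Fin (min (NA ^ 2) (NB ^ 2)) → ℝ)
      (E : Fin (min (NA ^ 2) (NB ^ 2)) → Matrix (Fin NA) (Fin NA) ℂ)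
      (F : Fin (min (NA ^ 2) (NB ^ 2)) → Matrix (Fin NB) (Fin NB) ℂ),
      SchmidtDecomp ρ μ E F ∧
      (∀ a, (E a).IsHermitian) ∧ (∀ a, (F a).IsHermitian) ∧
      (∀ a, (μ a : ℂ) = ((E a ⊗ₖ F a) * ρ).trace) :=
  stmt2_schmidt_decomposition_selfadjoint_general ρ hρ
end

section
/- (Realignment / computable cross norm criterion) If ρ is a separable state on H = H_A ⊗ H_B, i.e. ρ = Σ_i p_i ρ_i^A ⊗ ρ_i^B with p_i > 0, Σ_i p_i = 1, and ρ_i^A, ρ_i^B density operators on H_A, H_B, then ‖ρ‖_CCN = Σ_{a=1}^{d} μ_a ≤ 1, where {μ_a} are the operator Schmidt coefficients of ρ. -/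
open scoped Kronecker ComplexOrder
open Matrix Finset

/-- A separable bipartite state: a convex combination of product density operators. -/
def IsSeparableState {NA NB : ℕ} (ρ : Matrix (Fin NA × Fin NB) (Fin NA × Fin NB) ℂ) : Prop :=
  ∃ (m : ℕ) (p : Fin m → ℝ)
    (ρA : Fin m → Matrix (Fin NA) (Fin NA) ℂ) (ρB : Fin m → Matrix (Fin NB) (Fin NB) ℂ),
    (∀ i, 0 < p i) ∧ (∑ i, p i = 1) ∧ (∀ i, IsDensity (ρA i)) ∧ (∀ i, IsDensity (ρB i)) ∧
    ρ = ∑ i, (p i : ℂ) • (ρA i ⊗ₖ ρB i)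

/-- The computable cross norm (CCN) on bipartite operators. -/
noncomputable def ccn {NA NB : ℕ} (C : Matrix (Fin NA × Fin NB) (Fin NA × Fin NB) ℂ) : ℝ :=
  sInf { r : ℝ | ∃ (n : ℕ) (A : Fin n → Matrix (Fin NA) (Fin NA) ℂ)
    (B : Fin n → Matrix (Fin NB) (Fin NB) ℂ),
    C = ∑ k, A k ⊗ₖ B k ∧ r = ∑ k, hsNorm (A k) * hsNorm (B k) }

/-
Pairing a Schmidt decomposition `C = ∑ₐ μₐ Eₐ ⊗ Fₐ` with `Eₐ ⊗ Fₐ` gives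
`μₐ = ∑ₖ ⟨Eₐ, Aₖ⟩ ⟨Fₐ, Bₖ⟩` for every decomposition `C = ∑ₖ Aₖ ⊗ Bₖ`, so Cauchy–Schwarz and
Bessel's inequality give `∑ₐ μₐ ≤ ∑ₖ ‖Aₖ‖ ‖Bₖ‖`. The Schmidt decomposition attains this bound,
hence it computes the cross norm. For a separable state the decomposition
`∑ᵢ pᵢ ρᵢᴬ ⊗ ρᵢᴮ` costs at most `∑ᵢ pᵢ = 1`, because a density operator has
`‖ρ‖_HS ≤ tr ρ = 1`: the `2 × 2` principal minors of a positive matrix give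
`|ρᵢⱼ|² ≤ ρᵢᵢ ρⱼⱼ`.
-/

section HilbertSchmidt
variable {n m : Type*} [Fintype n] [Fintype m]

def hsVec (A : Matrix n n ℂ) : EuclideanSpace ℂ (n × n) := WithLp.toLp 2 fun p => A p.1 p.2

lemma inner_hsVec (A B : Matrix n n ℂ) : inner ℂ (hsVec A) (hsVec B) = hsInner A B := by
  simp only [hsVec, hsInner, PiLp.inner_apply, RCLike.inner_apply, Fintype.sum_prod_type, trace,
    Matrix.diag, mul_apply, conjTranspose_apply]
  rw [Finset.sum_comm]
  simp [mul_comm]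

lemma hsNorm_eq_norm_hsVec (A : Matrix n n ℂ) : hsNorm A = ‖hsVec A‖ := by
  rw [hsNorm, ← inner_hsVec, norm_eq_sqrt_re_inner (𝕜 := ℂ)]
  rfl

lemma hsNorm_nonneg (A : Matrix n n ℂ) : 0 ≤ hsNorm A := Real.sqrt_nonneg _

lemma hsNorm_smul (c : ℂ) (A : Matrix n n ℂ) : hsNorm (c • A) = ‖c‖ * hsNorm A := by
  rw [hsNorm_eq_norm_hsVec, hsNorm_eq_norm_hsVec, ← norm_smul]
  rfl

lemma orthonormal_hsVec_iff {ι : Type*} [DecidableEq ι] (E : ι → Matrix n n ℂ) :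
    Orthonormal ℂ (hsVec ∘ E) ↔ ∀ a b, hsInner (E a) (E b) = if a = b then 1 else 0 := by
  simp only [orthonormal_iff_ite, Function.comp_apply, inner_hsVec]

lemma hsNorm_eq_one_of_orthonormal {ι : Type*} [DecidableEq ι] {E : ι → Matrix n n ℂ}
    (hE : ∀ a b, hsInner (E a) (E b) = if a = b then 1 else 0) (a : ι) : hsNorm (E a) = 1 := by
  rw [hsNorm_eq_norm_hsVec]
  exact ((orthonormal_hsVec_iff E).2 hE).1 a

end HilbertSchmidt

section Bessel
variable {n m ι : Type*} [Fintype n] [Fintype m] [Fintype ι] [DecidableEq ι]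

lemma sum_norm_hsInner_sq_le {E : ι → Matrix n n ℂ}
    (hE : ∀ a b, hsInner (E a) (E b) = if a = b then 1 else 0) (A : Matrix n n ℂ) :
    ∑ a, ‖hsInner (E a) A‖ ^ 2 ≤ hsNorm A ^ 2 := by
  simpa only [hsNorm_eq_norm_hsVec, Function.comp_apply, inner_hsVec] using
    ((orthonormal_hsVec_iff E).2 hE).sum_inner_products_le (hsVec A) (s := Finset.univ)

lemma sum_norm_hsInner_mul_le {E : ι → Matrix n n ℂ} {F : ι → Matrix m m ℂ}
    (hE : ∀ a b, hsInner (E a) (E b) = if a = b then 1 else 0)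
    (hF : ∀ a b, hsInner (F a) (F b) = if a = b then 1 else 0) (A : Matrix n n ℂ)
    (B : Matrix m m ℂ) :
    ∑ a, ‖hsInner (E a) A‖ * ‖hsInner (F a) B‖ ≤ hsNorm A * hsNorm B := by
  calc ∑ a, ‖hsInner (E a) A‖ * ‖hsInner (F a) B‖
      ≤ √(∑ a, ‖hsInner (E a) A‖ ^ 2) * √(∑ a, ‖hsInner (F a) B‖ ^ 2) :=
        Real.sum_mul_le_sqrt_mul_sqrt _ _ _
    _ ≤ √(hsNorm A ^ 2) * √(hsNorm B ^ 2) := by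
        gcongr
        exacts [sum_norm_hsInner_sq_le hE A, sum_norm_hsInner_sq_le hF B]
    _ = hsNorm A * hsNorm B := by
        rw [Real.sqrt_sq (hsNorm_nonneg A), Real.sqrt_sq (hsNorm_nonneg B)]

lemma hsInner_kronecker_sum_orthonormal {E : ι → Matrix n n ℂ} {F : ι → Matrix m m ℂ}
    (hE : ∀ a b, hsInner (E a) (E b) = if a = b then 1 else 0)
    (hF : ∀ a b, hsInner (F a) (F b) = if a = b then 1 else 0) (c : ι → ℂ) (a : ι) :
    hsInner (E a ⊗ₖ F a) (∑ b, c b • (E b ⊗ₖ F b)) = c a := by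
  simp [hsInner_sum_right, hsInner_smul_right, hsInner_kronecker, hE, hF]

theorem sum_le_sum_hsNorm_mul_of_eq_sum_kronecker {κ : Type*} [Fintype κ] {μ : ι → ℝ}
    {E : ι → Matrix n n ℂ} {F : ι → Matrix m m ℂ}
    (hE : ∀ a b, hsInner (E a) (E b) = if a = b then 1 else 0)
    (hF : ∀ a b, hsInner (F a) (F b) = if a = b then 1 else 0)
    (A : κ → Matrix n n ℂ) (B : κ → Matrix m m ℂ)
    (h : ∑ a, (μ a : ℂ) • (E a ⊗ₖ F a) = ∑ k, A k ⊗ₖ B k) :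
    ∑ a, μ a ≤ ∑ k, hsNorm (A k) * hsNorm (B k) := by
  have hμ (a : ι) : (μ a : ℂ) = ∑ k, hsInner (E a) (A k) * hsInner (F a) (B k) := by
    rw [← hsInner_kronecker_sum_orthonormal hE hF (fun b => (μ b : ℂ)) a, h, hsInner_sum_right]
    simp only [hsInner_kronecker]
  calc ∑ a, μ a = (∑ k, ∑ a, hsInner (E a) (A k) * hsInner (F a) (B k)).re := by
        rw [Finset.sum_comm, ← Finset.sum_congr rfl fun a _ => hμ a]
        simp
    _ ≤ ∑ k, ∑ a, ‖hsInner (E a) (A k)‖ * ‖hsInner (F a) (B k)‖ := by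
        rw [Complex.re_sum]
        gcongr with k
        refine (Complex.re_le_norm _).trans ((norm_sum_le _ _).trans_eq ?_)
        simp only [norm_mul]
    _ ≤ ∑ k, hsNorm (A k) * hsNorm (B k) := by
        gcongr with k
        exact sum_norm_hsInner_mul_le hE hF (A k) (B k)

end Bessel

lemma Matrix.PosSemidef.normSq_apply_le {n : Type*} {A : Matrix n n ℂ} (hA : A.PosSemidef)
    (i j : n) : Complex.normSq (A i j) ≤ (A i i).re * (A j j).re := by
  have hdet := (hA.submatrix ![i, j]).det_nonneg
  simp only [det_fin_two, submatrix_apply, Matrix.cons_val_zero, Matrix.cons_val_one,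
    sub_nonneg] at hdet
  rw [← hA.1.apply j i, ← hA.1.coe_re_apply_self i, ← hA.1.coe_re_apply_self j,
    Complex.star_def, Complex.mul_conj] at hdet
  exact Complex.real_le_real.mp (by rw [Complex.ofReal_mul]; exact hdet)

lemma hsNorm_le_re_trace {n : Type*} [Fintype n] {A : Matrix n n ℂ} (hA : A.PosSemidef) :
    hsNorm A ≤ A.trace.re := by
  have hsq : hsNorm A ^ 2 ≤ A.trace.re ^ 2 := by
    calc hsNorm A ^ 2 = ∑ i, ∑ j, Complex.normSq (A i j) := by
          simp only [hsNorm_eq_norm_hsVec, EuclideanSpace.norm_sq_eq, hsVec,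
            Fintype.sum_prod_type, Complex.normSq_eq_norm_sq]
      _ ≤ ∑ i, ∑ j, (A i i).re * (A j j).re := by
          gcongr with i _ j
          exact hA.normSq_apply_le i j
      _ = A.trace.re ^ 2 := by
          simp only [trace, Matrix.diag, Complex.re_sum, sq, Finset.sum_mul_sum]
  have htr : 0 ≤ A.trace.re := Complex.nonneg_iff.mp hA.trace_nonneg |>.1
  exact le_of_pow_le_pow_left₀ two_ne_zero htr hsq

lemma hsNorm_le_one_of_isDensity {n : Type*} [Fintype n] {ρ : Matrix n n ℂ} (hρ : IsDensity ρ) :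
    hsNorm ρ ≤ 1 := by
  simpa [hρ.2] using hsNorm_le_re_trace hρ.1

section CrossNorm
variable {NA NB : ℕ} {C : Matrix (Fin NA × Fin NB) (Fin NA × Fin NB) ℂ}

lemma ccn_le {n : ℕ} (A : Fin n → Matrix (Fin NA) (Fin NA) ℂ)
    (B : Fin n → Matrix (Fin NB) (Fin NB) ℂ) (hC : C = ∑ k, A k ⊗ₖ B k) :
    ccn C ≤ ∑ k, hsNorm (A k) * hsNorm (B k) := by
  refine csInf_le ⟨0, ?_⟩ ⟨n, A, B, hC, rfl⟩
  rintro r ⟨n, A, B, -, rfl⟩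
  exact Finset.sum_nonneg fun k _ => mul_nonneg (hsNorm_nonneg _) (hsNorm_nonneg _)

theorem ccn_eq_sum_of_orthonormal {d : ℕ} {μ : Fin d → ℝ} (hμ : ∀ a, 0 ≤ μ a)
    {E : Fin d → Matrix (Fin NA) (Fin NA) ℂ} {F : Fin d → Matrix (Fin NB) (Fin NB) ℂ}
    (hE : ∀ a b, hsInner (E a) (E b) = if a = b then 1 else 0)
    (hF : ∀ a b, hsInner (F a) (F b) = if a = b then 1 else 0)
    (hC : C = ∑ a, (μ a : ℂ) • (E a ⊗ₖ F a)) :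
    ccn C = ∑ a, μ a := by
  have hC' : C = ∑ a, ((μ a : ℂ) • E a) ⊗ₖ F a := by simp only [hC, smul_kronecker]
  refine le_antisymm ((ccn_le _ _ hC').trans_eq ?_) (le_csInf ⟨_, _, _, _, hC', rfl⟩ ?_)
  · refine Finset.sum_congr rfl fun a _ => ?_
    rw [hsNorm_smul, hsNorm_eq_one_of_orthonormal hE, hsNorm_eq_one_of_orthonormal hF,
      Complex.norm_of_nonneg (hμ a), mul_one, mul_one]
  · rintro r ⟨n, A, B, hAB, rfl⟩
    exact sum_le_sum_hsNorm_mul_of_eq_sum_kronecker hE hF A B (hC ▸ hAB)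

theorem ccn_le_one_of_isSeparableState (hC : IsSeparableState C) : ccn C ≤ 1 := by
  obtain ⟨m, p, ρA, ρB, hp, hp1, hρA, hρB, rfl⟩ := hC
  have hp0 (i : Fin m) : 0 ≤ p i := (hp i).le
  calc ccn (∑ i, (p i : ℂ) • (ρA i ⊗ₖ ρB i))
      ≤ ∑ i, hsNorm ((p i : ℂ) • ρA i) * hsNorm (ρB i) :=
        ccn_le _ _ (by simp only [smul_kronecker])
    _ = ∑ i, p i * hsNorm (ρA i) * hsNorm (ρB i) := by
        refine Finset.sum_congr rfl fun i _ => ?_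
        rw [hsNorm_smul, Complex.norm_of_nonneg (hp0 i)]
    _ ≤ ∑ i, p i := by
        gcongr with i
        refine (mul_le_of_le_one_right ?_ (hsNorm_le_one_of_isDensity (hρB i))).trans ?_
        · exact mul_nonneg (hp0 i) (hsNorm_nonneg _)
        · exact mul_le_of_le_one_right (hp0 i) (hsNorm_le_one_of_isDensity (hρA i))
    _ = 1 := hp1

end CrossNorm

theorem stmt8_realignment_criterion_general {NA NB : ℕ}
    (ρ : Matrix (Fin NA × Fin NB) (Fin NA × Fin NB) ℂ)
    (hsep : IsSeparableState ρ)
    (μ : Fin (min (NA ^ 2) (NB ^ 2)) → ℝ)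
    (E : Fin (min (NA ^ 2) (NB ^ 2)) → Matrix (Fin NA) (Fin NA) ℂ)
    (F : Fin (min (NA ^ 2) (NB ^ 2)) → Matrix (Fin NB) (Fin NB) ℂ)
    (hS : SchmidtDecomp ρ μ E F) :
    ccn ρ = ∑ a, μ a ∧ ∑ a, μ a ≤ 1 := by
  obtain ⟨hμ, hE, hF, hρ⟩ := hS
  have hccn : ccn ρ = ∑ a, μ a := ccn_eq_sum_of_orthonormal hμ hE hF hρ
  exact ⟨hccn, hccn ▸ ccn_le_one_of_isSeparableState hsep⟩

/-- The realignment (computable cross norm) criterion: a separable state has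
‖ρ‖_CCN = ∑ μₐ ≤ 1. -/
theorem stmt8_realignment_criterion {NA NB : ℕ} (hA : 2 ≤ NA) (hB : 2 ≤ NB)
    (ρ : Matrix (Fin NA × Fin NB) (Fin NA × Fin NB) ℂ)
    (hsep : IsSeparableState ρ)
    (μ : Fin (min (NA ^ 2) (NB ^ 2)) → ℝ)
    (E : Fin (min (NA ^ 2) (NB ^ 2)) → Matrix (Fin NA) (Fin NA) ℂ)
    (F : Fin (min (NA ^ 2) (NB ^ 2)) → Matrix (Fin NB) (Fin NB) ℂ)
    (hS : SchmidtDecomp ρ μ E F) :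
    ccn ρ = ∑ a, μ a ∧ ∑ a, μ a ≤ 1 :=
  stmt8_realignment_criterion_general ρ hsep μ E F hS
end
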